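/- For a set of weighted sites in ℝⁿ and a camera point Q, if a point x' of the power cell of site (P', ω') lies strictly on the open segment between Q and a point x of the power cell of site (P, ω), then pow(Q, P') ≤ pow(Q, P), where pow(z, P) = ‖z - P‖² - ω_P. Hence sorting cells by power distance from Q yields a valid painter's ordering for the power diagram. -/

import Mathlib

/-!
The difference `d z = ‖z - P'‖² - ‖z - P‖²` is affine in `z`, the quadratic terms cancelling.
With `c = ω' - ω`, the cell of `P` lies in `{d ≥ c}` and that of `P'` in `{d ≤ c}`. Since
`x' = l x + (1 - l) Q` with `0 ≤ l < 1`, `(1 - l) d Q = d x' - l d x ≤ (1 - l) c`.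
-/

open RealInnerProductSpace

section PowerDistance

variable {E : Type*} [NormedAddCommGroup E] [InnerProductSpace ℝ E]

theorem norm_sub_sq_sub_norm_sub_sq (z A B : E) :
    ‖z - A‖ ^ 2 - ‖z - B‖ ^ 2 = 2 * ⟪z, B - A⟫ + ‖A‖ ^ 2 - ‖B‖ ^ 2 := by
  rw [norm_sub_sq_real, norm_sub_sq_real, inner_sub_right]
  ring

theorem norm_sub_sq_sub_norm_sub_sq_smul_add_smul (x Q A B : E) (l : ℝ) :
    ‖l • x + (1 - l) • Q - A‖ ^ 2 - ‖l • x + (1 - l) • Q - B‖ ^ 2 =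
      l * (‖x - A‖ ^ 2 - ‖x - B‖ ^ 2) + (1 - l) * (‖Q - A‖ ^ 2 - ‖Q - B‖ ^ 2) := by
  simp only [norm_sub_sq_sub_norm_sub_sq, inner_add_left, real_inner_smul_left]
  ring

end PowerDistance

/-- Painter's ordering for power diagrams: if a point `x'` of the power cell of site
`(P i', ω i')` lies strictly on the open segment between the camera `Q` and a point `x`
of the power cell of site `(P i, ω i)`, then `pow(Q, P i') ≤ pow(Q, P i)`, where
`pow(z, P) = ‖z - P‖² - ω_P`. -/
theorem power_painter {n N : ℕ} (P : Fin N → EuclideanSpace ℝ (Fin n)) (ω : Fin N → ℝ)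
    (i i' : Fin N) (Q x x' : EuclideanSpace ℝ (Fin n))
    (hx : ∀ j, ‖x - P i‖ ^ 2 - ω i ≤ ‖x - P j‖ ^ 2 - ω j)
    (hx' : ∀ j, ‖x' - P i'‖ ^ 2 - ω i' ≤ ‖x' - P j‖ ^ 2 - ω j)
    (l : ℝ) (hl : l ∈ Set.Ioo (0:ℝ) 1)
    (hseg : x' = l • x + (1 - l) • Q) :
    ‖Q - P i'‖ ^ 2 - ω i' ≤ ‖Q - P i‖ ^ 2 - ω i := by
  obtain ⟨hl0, hl1⟩ := hl
  have h_affine := norm_sub_sq_sub_norm_sub_sq_smul_add_smul x Q (P i') (P i) l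
  rw [← hseg] at h_affine
  have hx_ge : l * (ω i' - ω i) ≤ l * (‖x - P i'‖ ^ 2 - ‖x - P i‖ ^ 2) :=
    mul_le_mul_of_nonneg_left (by linarith [hx i']) hl0.le
  have hQ : (1 - l) * (‖Q - P i'‖ ^ 2 - ‖Q - P i‖ ^ 2) ≤ (1 - l) * (ω i' - ω i) := by
    linarith [hx' i]
  linarith [le_of_mul_le_mul_left hQ (sub_pos.mpr hl1)]
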